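/- Let H be a multigraph with at least 3 edges, G = L(H) its line graph, and let e1, e2 be edges of H corresponding to vertices a1, a2 of G. Then G has a hamiltonian path with endpoints a1 and a2 if and only if H has an internally dominating (e1,e2)-trail. -/

import Mathlib

/-- A multigraph on vertex type `V` with edge type `E`: each edge is assigned an
unordered pair of endpoints (possibly equal, for loops). -/
structure Multigraph (V : Type*) (E : Type*) where
  inc : E → Sym2 V

namespace Multigraph

open scoped Classical

variable {V E : Type*} {M : Multigraph V E}

/-- Walks in a multigraph. -/
inductive Walk (M : Multigraph V E) : V → V → Type _ where
  | nil (v : V) : Walk M v v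
  | cons {u v w : V} (e : E) (h : M.inc e = s(u, v)) (p : Walk M v w) : Walk M u w

/-- The list of edges of a walk. -/
def Walk.edges : ∀ {u v : V}, M.Walk u v → List E
  | _, _, .nil _ => []
  | _, _, .cons e _ p => e :: p.edges

/-- The list of vertices visited by a walk, in order. -/
def Walk.support : ∀ {u v : V}, M.Walk u v → List V
  | _, v, .nil _ => [v]
  | u, _, .cons _ _ p => u :: p.support

/-- A trail is a walk with no repeated edge. -/
def Walk.IsTrail {u v : V} (p : M.Walk u v) : Prop := p.edges.Nodup

/-- The interior vertices of a walk (all vertices except the two ends). -/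
def Walk.interior {u v : V} (p : M.Walk u v) : List V := p.support.tail.dropLast

/-- Two vertices are reachable if joined by a walk. -/
def Reachable (M : Multigraph V E) (u v : V) : Prop := Nonempty (M.Walk u v)

/-- Reachability avoiding a set `R` of edges. -/
def ReachableOff (M : Multigraph V E) (R : Set E) (u v : V) : Prop :=
  ∃ p : M.Walk u v, ∀ e ∈ p.edges, e ∉ R

/-- A multigraph is connected if every two vertices are joined by a walk. -/
def Connected (M : Multigraph V E) : Prop := ∀ u v : V, M.Reachable u v

/-- A multigraph is `k`-edge-connected if it stays connected after the removal of
any set of fewer than `k` edges. -/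
def KEdgeConnected (M : Multigraph V E) (k : ℕ) : Prop :=
  ∀ R : Finset E, R.card < k → ∀ u v : V, M.ReachableOff (↑R) u v

/-- An edge-cut `R` is essential if after its removal two remaining edges lie in
different components. -/
def IsEssentialCut (M : Multigraph V E) (R : Finset E) : Prop :=
  ∃ (e f : E) (u v : V), e ∉ R ∧ f ∉ R ∧ u ∈ M.inc e ∧ v ∈ M.inc f ∧
    ¬ M.ReachableOff (↑R) u v

/-- A multigraph is essentially `k`-edge-connected if every essential edge-cut has
size at least `k`. -/
def EssentiallyKEdgeConnected (M : Multigraph V E) (k : ℕ) : Prop :=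
  ∀ R : Finset E, M.IsEssentialCut R → k ≤ R.card

/-- The line graph of a multigraph: vertices are the edges, adjacent when sharing
an endpoint. -/
def lineGraph (M : Multigraph V E) : SimpleGraph E where
  Adj e f := e ≠ f ∧ ∃ v : V, v ∈ M.inc e ∧ v ∈ M.inc f
  symm := by
    refine ⟨?_⟩
    rintro e f ⟨hne, v, hv1, hv2⟩
    exact ⟨hne.symm, v, hv2, hv1⟩
  loopless := by refine ⟨?_⟩; rintro e ⟨hne, -⟩; exact hne rfl

/-- The degree of a vertex: the number of edge-ends at it (loops count twice). -/
noncomputable def degree (M : Multigraph V E) [Fintype E] (v : V) : ℕ :=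
  ∑ e : E, Sym2.lift ⟨fun a b => (if a = v then 1 else 0) + (if b = v then 1 else 0),
    fun a b => by ring⟩ (M.inc e)

/-- A pendant edge: an edge with an endpoint of degree `1`. -/
def IsPendant (M : Multigraph V E) [Fintype E] (e : E) : Prop :=
  ∃ v : V, v ∈ M.inc e ∧ M.degree v = 1

/-- A closed trail whose vertex set dominates every edge. -/
def HasDominatingClosedTrail (M : Multigraph V E) : Prop :=
  ∃ (v : V) (p : M.Walk v v), p.IsTrail ∧
    ∀ e : E, ∃ x : V, x ∈ M.inc e ∧ x ∈ p.support

/-- A closed trail through every vertex. -/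
def HasSpanningClosedTrail (M : Multigraph V E) : Prop :=
  ∃ (v : V) (p : M.Walk v v), p.IsTrail ∧ ∀ x : V, x ∈ p.support

/-- An internally dominating `(e₁,e₂)`-trail: a trail with first edge `e₁` and last
edge `e₂` whose interior vertices dominate every edge. -/
def HasIDT (M : Multigraph V E) (e₁ e₂ : E) : Prop :=
  ∃ (u v : V) (p : M.Walk u v), p.IsTrail ∧
    p.edges.head? = some e₁ ∧ p.edges.getLast? = some e₂ ∧
    ∀ e : E, ∃ x : V, x ∈ M.inc e ∧ x ∈ p.interior

end Multigraph

/-! A hamiltonian path of `L(H)` from `e₁` to `e₂` is an enumeration of `E(H)` from `e₁` to `e₂`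
in which consecutive edges meet. Follow it through `H`, traversing an edge only when the next one
does not contain the current vertex: this gives an `(e₁,e₂)`-trail that departs from an endpoint of
every edge, i.e. an internally dominating one. Conversely, list the edges of an internally
dominating trail in order and insert, just before the edge leaving each interior vertex `x`, the
unlisted edges at `x`: consecutive edges still meet and every edge appears exactly once. -/

theorem List.Nodup.exists_nodup_append_forall_mem {α : Type*} [Fintype α] {l : List α}
    (hl : l.Nodup) : ∃ X : List α, (l ++ X).Nodup ∧ ∀ a, a ∈ l ++ X := by
  classical
  refine ⟨(Finset.univ \ l.toFinset).toList, ?_, fun a => ?_⟩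
  · refine List.nodup_append.2 ⟨hl, Finset.nodup_toList _, fun a ha b hb hab => ?_⟩
    simp_all
  · by_cases ha : a ∈ l <;> simp [ha]

namespace SimpleGraph

theorem exists_walk_isHamiltonian_iff {α : Type*} [DecidableEq α] {G : SimpleGraph α}
    {a b : α} :
    (∃ p : G.Walk a b, p.IsHamiltonian) ↔
      ∃ l : List α, l.Nodup ∧ (∀ x, x ∈ l) ∧ l.IsChain G.Adj ∧
        l.head? = some a ∧ l.getLast? = some b := by
  constructor
  · rintro ⟨p, hp⟩
    refine ⟨p.support, hp.isPath.support_nodup, hp.mem_support, p.isChain_adj_support, ?_, ?_⟩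
    · rw [← p.cons_tail_support, List.head?_cons]
    · rw [List.getLast?_eq_some_getLast p.support_ne_nil, p.getLast_support]
  · rintro ⟨l, hnd, hall, hchain, hhead, hlast⟩
    have hne : l ≠ [] := by rintro rfl; simp at hhead
    let p := (Walk.ofSupport l hne hchain).copy
      (by simpa [List.head?_eq_some_head hne] using hhead)
      (by simpa [List.getLast?_eq_some_getLast hne] using hlast)
    refine ⟨p, (Walk.IsPath.mk' ?_).isHamiltonian_iff.2 ?_⟩ <;>
      simpa [p, Walk.support_copy, Walk.support_ofSupport]

end SimpleGraph

namespace Multigraph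

variable {V E : Type*} {M : Multigraph V E}

def Meets (M : Multigraph V E) (e f : E) : Prop := ∃ v, v ∈ M.inc e ∧ v ∈ M.inc f

def Dominates (M : Multigraph V E) (S : List V) (e : E) : Prop := ∃ x, x ∈ M.inc e ∧ x ∈ S

theorem isChain_meets_of_forall_mem_inc {u : V} {L : List E} (hL : ∀ e ∈ L, u ∈ M.inc e) :
    L.IsChain M.Meets :=
  List.Pairwise.isChain (List.pairwise_of_forall_mem_list fun a ha b hb => ⟨u, hL a ha, hL b hb⟩)

theorem isChain_lineGraph_adj_iff {L : List E} (hL : L.Nodup) :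
    L.IsChain M.lineGraph.Adj ↔ L.IsChain M.Meets := by
  induction L with
  | nil => simp
  | cons a l ih =>
    rw [List.isChain_cons, List.isChain_cons, ih hL.of_cons]
    have hne : ∀ b ∈ l.head?, a ≠ b := fun b hb hab =>
      (List.nodup_cons.1 hL).1 (hab ▸ List.mem_of_mem_head? hb)
    exact and_congr_left' ⟨fun h b hb => (h b hb).2, fun h b hb => ⟨hne b hb, h b hb⟩⟩

namespace Walk

theorem support_ne_nil : ∀ {u v : V} (p : M.Walk u v), p.support ≠ []
  | _, _, .nil _ => List.cons_ne_nil _ _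
  | _, _, .cons _ _ _ => List.cons_ne_nil _ _

theorem dropLast_support_cons {u v w : V} {e : E} (h : M.inc e = s(u, v)) (q : M.Walk v w) :
    (cons e h q).support.dropLast = u :: q.support.dropLast :=
  List.dropLast_cons_of_ne_nil q.support_ne_nil

theorem interior_cons {u v w : V} {e : E} (h : M.inc e = s(u, v)) (q : M.Walk v w) :
    (cons e h q).interior = q.support.dropLast :=
  rfl

theorem start_mem_dropLast_support {u v : V} (p : M.Walk u v) (hp : p.edges ≠ []) :
    u ∈ p.support.dropLast := by
  cases p with
  | nil => exact absurd rfl hp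
  | cons e h q => rw [dropLast_support_cons]; exact List.mem_cons_self

end Walk

theorem exists_walk_dominates_of_isChain (L : List E) (hL : L.IsChain M.Meets) (v : V)
    (hv : ∀ f ∈ L.head?, v ∈ M.inc f) :
    ∃ (w : V) (p : M.Walk v w), p.edges.Sublist L ∧ p.edges.getLast? = L.getLast? ∧
      ∀ e ∈ L, M.Dominates p.support.dropLast e := by
  induction L generalizing v with
  | nil => exact ⟨v, .nil v, List.Sublist.slnil, rfl, by simp⟩
  | cons f rest ih =>
    obtain ⟨hmeets, hrest⟩ := List.isChain_cons.1 hL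
    obtain ⟨u, hf⟩ := Sym2.mem_iff_exists.1 (hv f rfl)
    by_cases hu : ∀ g ∈ rest.head?, u ∈ M.inc g
    · -- continue the walk along `f`, from `v` to its other end `u`
      obtain ⟨w, p, hsub, hlast, hdom⟩ := ih hrest u hu
      refine ⟨w, .cons f hf p, hsub.cons_cons f, ?_, ?_⟩
      · show (f :: p.edges).getLast? = _
        rw [List.getLast?_cons, hlast, List.getLast?_cons]
      · rintro e (_ | ⟨_, he⟩)
        · exact ⟨v, hv f rfl, by rw [Walk.dropLast_support_cons]; exact List.mem_cons_self⟩
        · obtain ⟨x, hxe, hx⟩ := hdom e he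
          exact ⟨x, hxe, by rw [Walk.dropLast_support_cons]; exact List.mem_cons_of_mem _ hx⟩
    · -- `f` is skipped: the next edge already contains `v`
      push Not at hu
      obtain ⟨g, hg, hug⟩ := hu
      obtain ⟨rest, rfl⟩ := List.head?_eq_some_iff.1 hg
      have hvg : v ∈ M.inc g := by
        obtain ⟨x, hxf, hxg⟩ := hmeets g hg
        rw [hf, Sym2.mem_iff] at hxf
        rcases hxf with rfl | rfl
        exacts [hxg, absurd hxg hug]
      obtain ⟨w, p, hsub, hlast, hdom⟩ := ih hrest v (by simpa using hvg)
      have hp : p.edges ≠ [] := by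
        rintro h
        rw [h, List.getLast?_nil, eq_comm, List.getLast?_eq_none_iff] at hlast
        exact List.cons_ne_nil _ _ hlast
      refine ⟨w, p, hsub.cons f, by rw [hlast, List.getLast?_cons_cons], ?_⟩
      rintro e (_ | ⟨_, he⟩)
      · exact ⟨v, hv f rfl, p.start_mem_dropLast_support hp⟩
      · exact hdom e he

open scoped List in
theorem exists_isChain_perm_of_dominates {u w : V} (p : M.Walk u w) (X : List E)
    (hX : ∀ e ∈ X, M.Dominates p.support.dropLast e) :
    ∃ L : List E, L.Perm (p.edges ++ X) ∧ L.IsChain M.Meets ∧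
      L.getLast? = p.edges.getLast? ∧ ∀ f ∈ L.head?, u ∈ M.inc f := by
  classical
  induction p generalizing X with
  | nil v =>
    obtain rfl : X = [] := List.eq_nil_iff_forall_not_mem.2 fun e he => by
      obtain ⟨x, -, hx⟩ := hX e he
      simp [Walk.support] at hx
    exact ⟨[], List.Perm.refl _, List.isChain_nil, rfl, by simp⟩
  | @cons u v w e h q ih =>
    -- the edges of `X` at `u` are placed just before `e`, the others are left to `q`
    set A := X.filter (fun f => decide (u ∈ M.inc f))
    set B := X.filter (fun f => !decide (u ∈ M.inc f))
    have hA : ∀ f ∈ A, u ∈ M.inc f := fun f hf => by simpa [A] using (List.mem_filter.1 hf).2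
    have hB : ∀ f ∈ B, M.Dominates q.support.dropLast f := by
      intro f hf
      obtain ⟨hfX, huf⟩ := List.mem_filter.1 hf
      obtain ⟨x, hxf, hx⟩ := hX f hfX
      rw [Walk.dropLast_support_cons, List.mem_cons] at hx
      rcases hx with rfl | hx
      · simp [hxf] at huf
      · exact ⟨x, hxf, hx⟩
    have hue : u ∈ M.inc e := by rw [h]; exact Sym2.mem_mk_left u v
    obtain ⟨Lq, hperm, hchain, hlast, hhead⟩ := ih B hB
    refine ⟨A ++ e :: Lq, ?_, ?_, ?_, ?_⟩
    · calc A ++ e :: Lq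
          _ ~ e :: (A ++ Lq) := List.perm_middle
          _ ~ e :: (A ++ (q.edges ++ B)) := (hperm.append_left A).cons e
          _ ~ e :: (q.edges ++ (A ++ B)) := (List.perm_append_comm_assoc _ _ _).cons e
          _ ~ e :: (q.edges ++ X) := ((List.filter_append_perm _ X).append_left _).cons e
    · refine List.isChain_append.2 ⟨isChain_meets_of_forall_mem_inc hA, ?_, ?_⟩
      · refine List.isChain_cons.2 ⟨fun f hf => ⟨v, ?_, hhead f hf⟩, hchain⟩
        rw [h]; exact Sym2.mem_mk_right u v
      · intro f hf g hg
        obtain rfl : e = g := by simpa using hg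
        exact ⟨u, hA f (List.mem_of_mem_getLast? hf), hue⟩
    · show _ = (e :: q.edges).getLast?
      simp [List.getLast?_append, List.getLast?_cons, hlast]
    · intro f hf
      rcases A with _ | ⟨a, A⟩
      · obtain rfl : e = f := by simpa using hf
        exact hue
      · obtain rfl : a = f := by simpa using hf
        exact hA a List.mem_cons_self

theorem hasIDT_of_isChain {e₁ e₂ : E} {L : List E} (hnd : (e₁ :: L).Nodup)
    (hall : ∀ e, e ∈ e₁ :: L) (hchain : (e₁ :: L).IsChain M.Meets) (hL : L ≠ [])
    (hlast : (e₁ :: L).getLast? = some e₂) : M.HasIDT e₁ e₂ := by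
  obtain ⟨g, hg⟩ := Option.ne_none_iff_exists'.1 (mt List.head?_eq_none_iff.1 hL)
  obtain ⟨hmeets, hchainL⟩ := List.isChain_cons.1 hchain
  obtain ⟨v, hve₁, hvg⟩ := hmeets g hg
  obtain ⟨u, hu⟩ := Sym2.mem_iff_exists.1 hve₁
  obtain ⟨w, p, hsub, hlastp, hdom⟩ :=
    exists_walk_dominates_of_isChain L hchainL v (by simpa [hg] using hvg)
  have hp : p.edges ≠ [] := by
    rintro h
    rw [h, List.getLast?_nil, eq_comm, List.getLast?_eq_none_iff] at hlastp
    exact hL hlastp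
  refine ⟨u, w, .cons e₁ (hu.trans Sym2.eq_swap) p, (hsub.cons_cons e₁).nodup hnd, rfl, ?_, ?_⟩
  · show (e₁ :: p.edges).getLast? = _
    rwa [List.getLast?_cons, hlastp, ← List.getLast?_cons]
  · intro e
    rw [Walk.interior_cons]
    rcases List.mem_cons.1 (hall e) with rfl | he
    · exact ⟨v, hve₁, p.start_mem_dropLast_support hp⟩
    · exact hdom e he

theorem exists_isChain_of_hasIDT [Fintype E] {e₁ e₂ : E} (h : M.HasIDT e₁ e₂) :
    ∃ L : List E, L.Nodup ∧ (∀ e, e ∈ L) ∧ L.IsChain M.Meets ∧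
      L.head? = some e₁ ∧ L.getLast? = some e₂ := by
  obtain ⟨u, w, p, htrail, hhead, hlast, hdom⟩ := h
  cases p with
  | nil => simp [Walk.edges] at hhead
  | @cons _ v _ e he q =>
    obtain rfl : e = e₁ := by simpa [Walk.edges] using hhead
    obtain ⟨X, hnd, hall⟩ := List.Nodup.exists_nodup_append_forall_mem htrail
    obtain ⟨L, hperm, hchain, hlastL, hheadL⟩ :=
      exists_isChain_perm_of_dominates q X fun f _ => Walk.interior_cons he q ▸ hdom f
    have hperm' : (e :: L).Perm (e :: q.edges ++ X) := hperm.cons e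
    refine ⟨e :: L, hperm'.nodup_iff.2 hnd, fun f => hperm'.mem_iff.2 (hall f), ?_, rfl, ?_⟩
    · refine List.isChain_cons.2 ⟨fun f hf => ⟨v, ?_, hheadL f hf⟩, hchain⟩
      rw [he]; exact Sym2.mem_mk_right _ _
    · rwa [List.getLast?_cons, hlastL, ← List.getLast?_cons]

end Multigraph

/-- For a multigraph `H` with at least `3` edges and edges `e₁, e₂` of `H`
(equivalently, vertices of `L(H)`), the line graph `L(H)` has a hamiltonian path
with endpoints `e₁, e₂` if and only if `H` has an internally dominating
`(e₁,e₂)`-trail. -/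
theorem stmt5 {V E : Type*} [Fintype E] [DecidableEq E] (M : Multigraph V E)
    (hE : 3 ≤ Fintype.card E) (e₁ e₂ : E) :
    (∃ p : (M.lineGraph).Walk e₁ e₂, p.IsHamiltonian) ↔ M.HasIDT e₁ e₂ := by
  rw [SimpleGraph.exists_walk_isHamiltonian_iff]
  constructor
  · rintro ⟨L, hnd, hall, hchain, hhead, hlast⟩
    obtain ⟨L, rfl⟩ := List.head?_eq_some_iff.1 hhead
    have hL : L ≠ [] := by
      rintro rfl
      have : Fintype.card E ≤ 1 :=
        Fintype.card_le_one_iff.2 fun a b => by simp_all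
      omega
    exact Multigraph.hasIDT_of_isChain hnd hall
      ((Multigraph.isChain_lineGraph_adj_iff hnd).1 hchain) hL hlast
  · intro h
    obtain ⟨L, hnd, hall, hchain, hhead, hlast⟩ := Multigraph.exists_isChain_of_hasIDT h
    exact ⟨L, hnd, hall, (Multigraph.isChain_lineGraph_adj_iff hnd).2 hchain, hhead, hlast⟩
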